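/- With R(u,s) = √(u³/3 + u² + s), ρ(s) = 5/(3s(3s+4)), P(u,s) = (2/15)[u(2−u)(3+u)² + 6s(1+u)], and Q(u,s) = ρ(s)·P(u,s)/R(u,s), the identity ∂Q/∂u = 1/R(u,s)³ − ρ(s)·R(u,s) holds wherever R(u,s) ≠ 0 and s ∉ {0, −4/3}. -/

import Mathlib

/-!
Differentiating `R² = g` with `g(u) = u³/3 + u² + s` gives `R' = g'/(2R)`, so the quotient rule yields
`(ρ P / R)' = ρ (P' g − P g'/2) / R³`. The polynomial `P` is chosen so that the Wronskian-type
combination `P' g − P g'/2 + g²` is the constant `3s(3s+4)/5 = 1/ρ`, which turns the numerator into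
`1 − ρ R⁴`.
-/

section SquareRootBranch

variable {𝕜 : Type*} [NontriviallyNormedField 𝕜] [CharZero 𝕜] {R f p : 𝕜 → 𝕜} {u f' p' : 𝕜}

theorem hasDerivAt_of_sq_eventuallyEq (hsq : ∀ᶠ v in nhds u, R v ^ 2 = f v)
    (hR : DifferentiableAt 𝕜 R u) (hRu : R u ≠ 0) (hf : HasDerivAt f f' u) :
    HasDerivAt R (f' / (2 * R u)) u := by
  have hsq' : HasDerivAt (fun v => R v ^ 2) (2 * R u * deriv R u) u :=
    (hR.hasDerivAt.fun_pow 2).congr_deriv (by simp)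
  have hR' : 2 * R u * deriv R u = f' := hsq'.unique (hf.congr_of_eventuallyEq hsq)
  refine hR.hasDerivAt.congr_deriv ?_
  rw [← hR']
  field_simp

theorem hasDerivAt_div_of_sq_eventuallyEq (hp : HasDerivAt p p' u)
    (hsq : ∀ᶠ v in nhds u, R v ^ 2 = f v) (hR : DifferentiableAt 𝕜 R u) (hRu : R u ≠ 0)
    (hf : HasDerivAt f f' u) :
    HasDerivAt (fun v => p v / R v) ((p' * f u - p u * f' / 2) / R u ^ 3) u := by
  refine (hp.div (hasDerivAt_of_sq_eventuallyEq hsq hR hRu hf) hRu).congr_deriv ?_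
  rw [← hsq.self_of_nhds]
  field_simp

end SquareRootBranch

theorem hasDerivAt_cubic (s u : ℂ) :
    HasDerivAt (fun v => v ^ 3 / 3 + v ^ 2 + s) (u ^ 2 + 2 * u) u := by
  refine ((((hasDerivAt_pow 3 u).div_const 3).add (hasDerivAt_pow 2 u)).add_const s).congr_deriv ?_
  push_cast
  ring

theorem hasDerivAt_numerator (s u : ℂ) :
    HasDerivAt (fun v => (2 / 15) * (v * (2 - v) * (3 + v) ^ 2 + 6 * s * (1 + v)))
      ((2 / 15) * (2 * (3 + u) * (3 - 2 * u ^ 2) + 6 * s)) u := by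
  have hid := hasDerivAt_id u
  refine ((((hid.mul (hid.const_sub 2)).mul ((hid.const_add 3).fun_pow 2)).add
    ((hid.const_add 1).const_mul (6 * s))).const_mul (2 / 15)).congr_deriv ?_
  simp only [id, Pi.mul_apply]
  ring

theorem numerator_wronskian (s u : ℂ) :
    (2 / 15) * (2 * (3 + u) * (3 - 2 * u ^ 2) + 6 * s) * (u ^ 3 / 3 + u ^ 2 + s)
      - (2 / 15) * (u * (2 - u) * (3 + u) ^ 2 + 6 * s * (1 + u)) * (u ^ 2 + 2 * u) / 2
      + (u ^ 3 / 3 + u ^ 2 + s) ^ 2 = 3 * s * (3 * s + 4) / 5 := by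
  ring

/-- With `R` a local analytic branch of `√(u³/3+u²+s)`, `ρ(s) = 5/(3s(3s+4))`,
`P(u,s) = (2/15)[u(2−u)(3+u)² + 6s(1+u)]` and `Q = ρ P / R`, one has
`∂Q/∂u = 1/R³ − ρ R`. -/
theorem dQ_du_identity (u s : ℂ) (hs : s * (3 * s + 4) ≠ 0)
    (R : ℂ → ℂ)
    (hRsq : ∀ᶠ v in nhds u, (R v) ^ 2 = v ^ 3 / 3 + v ^ 2 + s)
    (hRd : DifferentiableAt ℂ R u) (hRne : R u ≠ 0) :
    deriv (fun v => (5 / (3 * s * (3 * s + 4)))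
        * ((2 / 15) * (v * (2 - v) * (3 + v) ^ 2 + 6 * s * (1 + v))) / R v) u
      = 1 / (R u) ^ 3 - (5 / (3 * s * (3 * s + 4))) * R u := by
  have hQ := hasDerivAt_div_of_sq_eventuallyEq
    ((hasDerivAt_numerator s u).const_mul (5 / (3 * s * (3 * s + 4))))
    hRsq hRd hRne (hasDerivAt_cubic s u)
  rw [hQ.deriv]
  have hR : R u ^ 2 = u ^ 3 / 3 + u ^ 2 + s := hRsq.self_of_nhds
  have hs₀ : s ≠ 0 := left_ne_zero_of_mul hs
  have hs₁ : 3 * s + 4 ≠ 0 := right_ne_zero_of_mul hs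
  field_simp
  rw [show R u ^ 4 = (R u ^ 2) ^ 2 by ring, hR]
  linear_combination 75 * numerator_wronskian s u
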